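/- arXiv:2311.05416 — 3 statements merged into one kernel-verified Lean document; each statement's English description precedes it below -/
import Mathlib

section
/- Let H : (0,∞) × ℝ^d → ℝ be C³ and suppose that for some constant C̄ > 0 and all m > 0, p ∈ ℝ^d: |H_{pp}(m,p)| ≤ C̄, |H_{pm}(m,p)| ≤ C̄|p|, |H_{ppp}(m,p)| ≤ C̄, |H_{ppm}(m,p)| ≤ C̄, and |H_{mmp}(m,p)| ≤ C̄|p|. Then for all R, M > 0 there exists a constant C > 0, depending only on C̄, R and M, such that for all m, m' with 0 < m ≤ M and m' > 0, and all p, p' ∈ ℝ^d with |p| ≤ R, setting δp = p' - p and δm = m' - m: |m'·H_p(m',p') - m·H_p(m,p) - m'·H_{pp}(m',p')δp - δm·H_p(m',p') - m'·H_{pm}(m',p')δm| ≤ C(|δp|² + |δm|² + |δp|⁴ + |δm|⁴ + |δm|³ + |δm|⁶). -/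
open scoped RealInnerProductSpace

noncomputable section

/-- Euclidean space ℝ^d. -/
abbrev E (d : ℕ) : Type := EuclideanSpace ℝ (Fin d)

/-- `H_p`: gradient of `H = H(m,p)` in the variable `p`. -/
def Hp {d : ℕ} (H : ℝ → E d → ℝ) (m : ℝ) (p : E d) : E d := gradient (H m) p

/-- `H_m`: partial derivative of `H = H(m,p)` in the variable `m`. -/
def Hm {d : ℕ} (H : ℝ → E d → ℝ) (m : ℝ) (p : E d) : ℝ :=
  deriv (fun s => H s p) m

/-- `H_pp`: Hessian of `H` in `p`, as a continuous linear map (operator norm). -/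
def Hpp {d : ℕ} (H : ℝ → E d → ℝ) (m : ℝ) (p : E d) : E d →L[ℝ] E d :=
  fderiv ℝ (fun q => Hp H m q) p

/-- `H_pm`: gradient in `p` of `H_m`. -/
def Hpm {d : ℕ} (H : ℝ → E d → ℝ) (m : ℝ) (p : E d) : E d :=
  gradient (fun q => Hm H m q) p

/-- `H_mm`: second derivative of `H` in `m`. -/
def Hmm {d : ℕ} (H : ℝ → E d → ℝ) (m : ℝ) (p : E d) : ℝ :=
  deriv (fun s => Hm H s p) m

/-!
Write `Φ(m, p) = m • H_p(m, p)`. The remainder splits into four pieces: `m'` times the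
second-order Taylor remainder of `H_p(m', ·)` between `p'` and `p` (controlled by `|H_ppp|`); the
second-order Taylor remainder of `s ↦ Φ(s, p)` between `m'` and `m`, whose second derivative
`2 H_pm + s ∇_p H_mm` is `O(|p|)`; and `δm (H_p(m', p) - H_p(m', p'))` and
`m' δm (H_pm(m', p) - H_pm(m', p'))`, which are Lipschitz in `p` by `|H_pp|` and `|H_ppm|`.
The identities `∂_m H_p = H_pm` and `∂_m H_pm = ∇_p H_mm` come from the symmetry of the second
derivatives of the `C²` maps `(m, p) ↦ H` and `(m, p) ↦ H_m`. Finally `m' ≤ M + |δm|`, and AM–GM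
absorbs the mixed monomials `|δm| |δp|`, `|δm| |δp|²`, `|δm|² |δp|` into the stated polynomial.
-/

open Topology InnerProductSpace ContinuousLinearMap

section Calculus

variable {V W : Type*} [NormedAddCommGroup V] [NormedSpace ℝ V]
  [NormedAddCommGroup W] [NormedSpace ℝ W]

theorem Convex.norm_image_sub_sub_apply_le_of_lipschitz {s : Set V} (hs : Convex ℝ s)
    {f : V → W} {f' : V → V →L[ℝ] W} {C : ℝ} {x y : V}
    (hf : ∀ z ∈ s, HasFDerivWithinAt f (f' z) s z) (hC : 0 ≤ C)
    (hlip : ∀ z ∈ s, ‖f' z - f' x‖ ≤ C * ‖z - x‖) (hx : x ∈ s) (hy : y ∈ s) :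
    ‖f y - f x - f' x (y - x)‖ ≤ C * ‖y - x‖ ^ 2 := by
  set t := s ∩ Metric.closedBall x ‖y - x‖
  have hbound : ∀ z ∈ t, ‖f' z - f' x‖ ≤ C * ‖y - x‖ := fun z hz =>
    (hlip z hz.1).trans (mul_le_mul_of_nonneg_left (mem_closedBall_iff_norm.1 hz.2) hC)
  have := (hs.inter (convex_closedBall x _)).norm_image_sub_le_of_norm_hasFDerivWithin_le'
    (fun z hz => (hf z hz.1).mono Set.inter_subset_left) hbound
    ⟨hx, Metric.mem_closedBall_self (norm_nonneg _)⟩ ⟨hy, mem_closedBall_iff_norm.2 le_rfl⟩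
  linarith

theorem Convex.norm_image_sub_sub_smul_le_of_lipschitz {s : Set ℝ} (hs : Convex ℝ s)
    {f f' : ℝ → W} {C x y : ℝ}
    (hf : ∀ z ∈ s, HasDerivWithinAt f (f' z) s z) (hC : 0 ≤ C)
    (hlip : ∀ z ∈ s, ‖f' z - f' x‖ ≤ C * |z - x|) (hx : x ∈ s) (hy : y ∈ s) :
    ‖f y - f x - (y - x) • f' x‖ ≤ C * |y - x| ^ 2 := by
  have hspan : ∀ z, toSpanSingleton ℝ (f' z) - toSpanSingleton ℝ (f' x) =
      toSpanSingleton ℝ (f' z - f' x) := fun z => by ext; simp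
  simpa using hs.norm_image_sub_sub_apply_le_of_lipschitz
    (fun z hz => (hf z hz).hasFDerivWithinAt) hC
    (fun z hz => by simpa [hspan] using hlip z hz) hx hy

theorem norm_fderiv_sub_le_of_norm_iteratedFDeriv_two_le {u : V → W} {K : ℝ}
    (hu : ContDiff ℝ 2 u) (hK : ∀ x, ‖iteratedFDeriv ℝ 2 u x‖ ≤ K) (x y : V) :
    ‖fderiv ℝ u x - fderiv ℝ u y‖ ≤ K * ‖x - y‖ :=
  convex_univ.norm_image_sub_le_of_norm_fderiv_le
    (fun z _ => ((hu.fderiv_right (m := 1) le_rfl).differentiable one_ne_zero) z)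
    (fun z _ => by rw [← norm_iteratedFDeriv_one, norm_iteratedFDeriv_fderiv]; exact hK z)
    (Set.mem_univ y) (Set.mem_univ x)

theorem ContDiffAt.hasDerivAt_fderiv_slice_comm {g : ℝ × V → W} {s : ℝ} {p : V}
    (hg : ContDiffAt ℝ 2 g (s, p)) :
    HasDerivAt (fun t => fderiv ℝ (fun q => g (t, q)) p)
      (fderiv ℝ (fun q => deriv (fun t => g (t, q)) s) p) s := by
  set G := fderiv ℝ g
  have hG : ∀ᶠ y in 𝓝 (s, p), HasFDerivAt g (G y) y :=
    (hg.eventually (by simp)).mono fun y hy => (hy.differentiableAt (by simp)).hasFDerivAt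
  have hG' : HasFDerivAt G (fderiv ℝ G (s, p)) (s, p) :=
    ((hg.fderiv_right (m := 1) le_rfl).differentiableAt one_ne_zero).hasFDerivAt
  have hslice_snd : (fun t => fderiv ℝ (fun q => g (t, q)) p) =ᶠ[𝓝 s]
      fun t => (G (t, p)).comp (inr ℝ ℝ V) := by
    filter_upwards [(Continuous.prodMk_left p).continuousAt.eventually hG] with t ht
    exact (ht.comp p (hasFDerivAt_prodMk_right t p)).fderiv
  have hslice_fst : (fun q => deriv (fun t => g (t, q)) s) =ᶠ[𝓝 p]
      fun q => G (s, q) (1, 0) := by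
    filter_upwards [(Continuous.prodMk_right s).continuousAt.eventually hG] with q hq
    exact (hq.comp_hasDerivAt s ((hasDerivAt_id s).prodMk (hasDerivAt_const s q))).deriv
  have hd_snd : HasDerivAt (fun t => (G (t, p)).comp (inr ℝ ℝ V))
      ((fderiv ℝ G (s, p) (1, 0)).comp (inr ℝ ℝ V)) s :=
    ((compL ℝ V (ℝ × V) W).flip (inr ℝ ℝ V)).hasFDerivAt.comp_hasDerivAt s
      (hG'.comp_hasDerivAt s ((hasDerivAt_id s).prodMk (hasDerivAt_const s p)))
  have hd_fst : HasFDerivAt (fun q => G (s, q) (1, 0))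
      ((apply ℝ W ((1 : ℝ), (0 : V))).comp ((fderiv ℝ G (s, p)).comp (inr ℝ ℝ V))) p :=
    (apply ℝ W ((1 : ℝ), (0 : V))).hasFDerivAt.comp p (hG'.comp p (hasFDerivAt_prodMk_right s p))
  have hsymm : (apply ℝ W ((1 : ℝ), (0 : V))).comp ((fderiv ℝ G (s, p)).comp (inr ℝ ℝ V)) =
      (fderiv ℝ G (s, p) (1, 0)).comp (inr ℝ ℝ V) := by
    ext v
    exact (hg.isSymmSndFDerivAt (by simp)) (0, v) (1, 0)
  rw [hslice_fst.fderiv_eq, hd_fst.fderiv, hsymm]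
  exact hd_snd.congr_of_eventuallyEq hslice_snd

theorem ContDiffAt.deriv_slice_fst {g : ℝ × V → W} {x : ℝ × V} {n : ℕ}
    (hg : ContDiffAt ℝ (n + 1) g x) :
    ContDiffAt ℝ n (fun y : ℝ × V => deriv (fun t => g (t, y.2)) y.1) x := by
  refine ((hg.fderiv_right le_rfl).clm_apply
    (contDiffAt_const (c := ((1 : ℝ), (0 : V))))).congr_of_eventuallyEq ?_
  filter_upwards [hg.eventually (by simp)] with y hy
  exact ((hy.differentiableAt (by simp)).hasFDerivAt.comp_hasDerivAt y.1
    ((hasDerivAt_id y.1).prodMk (hasDerivAt_const y.1 y.2))).deriv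

theorem contDiff_slice {g : ℝ × V → W} {s : ℝ} {n : WithTop ℕ∞}
    (hg : ∀ q, ContDiffAt ℝ n g (s, q)) : ContDiff ℝ n (fun q => g (s, q)) :=
  contDiff_iff_contDiffAt.2 fun q => (hg q).comp q (contDiffAt_const.prodMk contDiffAt_id)

end Calculus

section Gradient

variable {V : Type*} [NormedAddCommGroup V] [InnerProductSpace ℝ V] [CompleteSpace V]

-- `(toDual ℝ V).symm` is only conjugate-linear in general; over `ℝ` it coerces to a
-- continuous linear map, which is what the chain rule needs.
theorem HasDerivAt.toDual_symm {φ : ℝ → StrongDual ℝ V} {φ' : StrongDual ℝ V} {s : ℝ}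
    (h : HasDerivAt φ φ' s) :
    HasDerivAt (fun t => (toDual ℝ V).symm (φ t)) ((toDual ℝ V).symm φ') s :=
  ((toDual ℝ V).symm.toLinearIsometry.toContinuousLinearMap :
    StrongDual ℝ V →L[ℝ] V).hasFDerivAt.comp_hasDerivAt s h

theorem HasFDerivAt.toDual_symm {W : Type*} [NormedAddCommGroup W] [NormedSpace ℝ W]
    {φ : W → StrongDual ℝ V} {φ' : W →L[ℝ] StrongDual ℝ V} {x : W}
    (h : HasFDerivAt φ φ' x) :
    HasFDerivAt (fun y => (toDual ℝ V).symm (φ y))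
      (((toDual ℝ V).symm.toLinearIsometry.toContinuousLinearMap :
        StrongDual ℝ V →L[ℝ] V).comp φ') x :=
  ((toDual ℝ V).symm.toLinearIsometry.toContinuousLinearMap :
    StrongDual ℝ V →L[ℝ] V).hasFDerivAt.comp x h

theorem norm_gradient_sub_le_of_norm_iteratedFDeriv_two_le {u : V → ℝ} {K : ℝ}
    (hu : ContDiff ℝ 2 u) (hK : ∀ x, ‖iteratedFDeriv ℝ 2 u x‖ ≤ K) (x y : V) :
    ‖gradient u x - gradient u y‖ ≤ K * ‖x - y‖ := by
  rw [gradient, gradient, ← map_sub, LinearIsometryEquiv.norm_map]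
  exact norm_fderiv_sub_le_of_norm_iteratedFDeriv_two_le hu hK x y

theorem norm_gradient_sub_le_of_norm_fderiv_gradient_le {f : V → ℝ} {K : ℝ}
    (hf : ContDiff ℝ 2 f) (hK : ∀ x, ‖fderiv ℝ (gradient f) x‖ ≤ K) (x y : V) :
    ‖gradient f x - gradient f y‖ ≤ K * ‖x - y‖ :=
  convex_univ.norm_image_sub_le_of_norm_fderiv_le
    (fun z _ => ((hf.fderiv_right (m := 1) le_rfl).differentiable one_ne_zero
      z).hasFDerivAt.toDual_symm.differentiableAt)
    (fun z _ => hK z) (Set.mem_univ y) (Set.mem_univ x)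

theorem norm_gradient_sub_sub_fderiv_gradient_le {f : V → ℝ} {K : ℝ}
    (hf : ContDiff ℝ 3 f) (hK : ∀ x, ‖iteratedFDeriv ℝ 3 f x‖ ≤ K) (x y : V) :
    ‖gradient f y - gradient f x - fderiv ℝ (gradient f) x (y - x)‖ ≤ K * ‖y - x‖ ^ 2 := by
  have hf' : ContDiff ℝ 2 (fderiv ℝ f) := hf.fderiv_right (by norm_num)
  have hd : ∀ z, HasFDerivAt (fderiv ℝ f) (fderiv ℝ (fderiv ℝ f) z) z := fun z =>
    (hf'.differentiable (by simp) z).hasFDerivAt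
  have hgrad : fderiv ℝ (gradient f) x (y - x) =
      (toDual ℝ V).symm (fderiv ℝ (fderiv ℝ f) x (y - x)) := by
    have h : HasFDerivAt (gradient f) _ x := (hd x).toDual_symm
    rw [h.fderiv]
    rfl
  rw [hgrad, gradient, gradient, ← map_sub, ← map_sub, LinearIsometryEquiv.norm_map]
  refine convex_univ.norm_image_sub_sub_apply_le_of_lipschitz (fun z _ => (hd z).hasFDerivWithinAt)
    ((norm_nonneg _).trans (hK x)) (fun z _ => ?_) trivial trivial
  exact norm_fderiv_sub_le_of_norm_iteratedFDeriv_two_le hf'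
    (fun z => (norm_iteratedFDeriv_fderiv).trans_le (hK z)) z x

end Gradient

theorem taylor_remainder_terms_le {M R D e : ℝ} (hM : 0 ≤ M) (hR : 0 ≤ R) (hD : 0 ≤ D)
    (he : 0 ≤ e) :
    (M + e) * D ^ 2 + R * (2 + (M + e)) * e ^ 2 + e * D + (M + e) * e * D ≤
      (2 * M + 3 + R * (3 + M)) * (D ^ 2 + e ^ 2 + D ^ 4 + e ^ 4 + e ^ 3 + e ^ 6) := by
  set S := D ^ 2 + e ^ 2 + D ^ 4 + e ^ 4 + e ^ 3 + e ^ 6 with hS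
  have hD2 : D ^ 2 ≤ S := by rw [hS]; nlinarith [pow_nonneg he 3, pow_nonneg hD 4]
  have he2 : e ^ 2 ≤ S := by rw [hS]; nlinarith [pow_nonneg he 3, pow_nonneg hD 4]
  have he3 : e ^ 3 ≤ S := by rw [hS]; nlinarith [pow_nonneg he 3, pow_nonneg hD 4]
  have heD2 : e * D ^ 2 ≤ S := by rw [hS]; nlinarith [sq_nonneg (e - D ^ 2), pow_nonneg he 3]
  have heD : e * D ≤ S := by rw [hS]; nlinarith [sq_nonneg (e - D), pow_nonneg he 3]
  have he2D : e ^ 2 * D ≤ S := by rw [hS]; nlinarith [sq_nonneg (e ^ 2 - D), pow_nonneg he 3]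
  calc _ = M * D ^ 2 + e * D ^ 2 + R * (2 + M) * e ^ 2 + R * e ^ 3 + e * D + M * (e * D)
        + e ^ 2 * D := by ring
    _ ≤ M * S + S + R * (2 + M) * S + R * S + S + M * S + S := by gcongr
    _ = _ := by ring

section Hamiltonian

variable {d : ℕ} {H : ℝ → E d → ℝ}

theorem contDiffAt_uncurry_of_pos
    (hH : ContDiffOn ℝ 3 (Function.uncurry H) {q : ℝ × E d | 0 < q.1})
    {x : ℝ × E d} (hx : 0 < x.1) : ContDiffAt ℝ 3 (Function.uncurry H) x :=
  hH.contDiffAt ((isOpen_lt continuous_const continuous_fst).mem_nhds hx)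

theorem contDiffAt_Hm (hH : ContDiffOn ℝ 3 (Function.uncurry H) {q : ℝ × E d | 0 < q.1})
    {x : ℝ × E d} (hx : 0 < x.1) : ContDiffAt ℝ 2 (fun y : ℝ × E d => Hm H y.1 y.2) x :=
  (contDiffAt_uncurry_of_pos hH hx).deriv_slice_fst (n := 2)

theorem contDiff_H (hH : ContDiffOn ℝ 3 (Function.uncurry H) {q : ℝ × E d | 0 < q.1})
    {m : ℝ} (hm : 0 < m) : ContDiff ℝ 3 (H m) :=
  contDiff_slice (g := Function.uncurry H) fun _ => contDiffAt_uncurry_of_pos hH hm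

theorem contDiff_Hm (hH : ContDiffOn ℝ 3 (Function.uncurry H) {q : ℝ × E d | 0 < q.1})
    {m : ℝ} (hm : 0 < m) : ContDiff ℝ 2 (fun q => Hm H m q) :=
  contDiff_slice (g := fun y : ℝ × E d => Hm H y.1 y.2) fun _ => contDiffAt_Hm hH hm

theorem hasDerivAt_Hp (hH : ContDiffOn ℝ 3 (Function.uncurry H) {q : ℝ × E d | 0 < q.1})
    {s : ℝ} (hs : 0 < s) (p : E d) : HasDerivAt (fun t => Hp H t p) (Hpm H s p) s :=
  ((contDiffAt_uncurry_of_pos hH (x := (s, p)) hs).of_le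
    (by norm_num)).hasDerivAt_fderiv_slice_comm.toDual_symm

theorem hasDerivAt_Hpm (hH : ContDiffOn ℝ 3 (Function.uncurry H) {q : ℝ × E d | 0 < q.1})
    {s : ℝ} (hs : 0 < s) (p : E d) :
    HasDerivAt (fun t => Hpm H t p) (gradient (fun q => Hmm H s q) p) s :=
  (contDiffAt_Hm hH (x := (s, p)) hs).hasDerivAt_fderiv_slice_comm.toDual_symm

theorem norm_smul_Hp_sub_sub_le
    (hH : ContDiffOn ℝ 3 (Function.uncurry H) {q : ℝ × E d | 0 < q.1}) {Cb : ℝ} (hCb : 0 ≤ Cb)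
    (hpm : ∀ m : ℝ, 0 < m → ∀ p : E d, ‖Hpm H m p‖ ≤ Cb * ‖p‖)
    (hmmp : ∀ m : ℝ, 0 < m → ∀ p : E d, ‖gradient (fun q => Hmm H m q) p‖ ≤ Cb * ‖p‖)
    {m m' : ℝ} (hm : 0 < m) (hm' : 0 < m') (p : E d) :
    ‖m • Hp H m p - m' • Hp H m' p - (m - m') • (Hp H m' p + m' • Hpm H m' p)‖ ≤
      Cb * ‖p‖ * (2 + max m m') * |m - m'| ^ 2 := by
  set K := Cb * ‖p‖ * (2 + max m m')
  have hI : ∀ t ∈ Set.uIcc m' m, 0 < t ∧ t ≤ max m m' := fun t ht =>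
    ⟨(lt_min hm' hm).trans_le ht.1, ht.2.trans (max_comm m' m).le⟩
  have hderiv : ∀ t ∈ Set.uIcc m' m,
      HasDerivAt (fun t => t • Hp H t p) (Hp H t p + t • Hpm H t p) t := fun t ht =>
    ((hasDerivAt_id' t).smul (hasDerivAt_Hp hH (hI t ht).1 p)).congr_deriv (by simp [add_comm])
  have hderiv2 : ∀ t ∈ Set.uIcc m' m, HasDerivAt (fun t => Hp H t p + t • Hpm H t p)
      (Hpm H t p + (Hpm H t p + t • gradient (fun q => Hmm H t q) p)) t := fun t ht =>
    ((hasDerivAt_Hp hH (hI t ht).1 p).add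
      ((hasDerivAt_id' t).smul (hasDerivAt_Hpm hH (hI t ht).1 p))).congr_deriv (by simp [add_comm])
  have hbound : ∀ t ∈ Set.uIcc m' m,
      ‖Hpm H t p + (Hpm H t p + t • gradient (fun q => Hmm H t q) p)‖ ≤ K := fun t ht => by
    obtain ⟨ht0, htmax⟩ := hI t ht
    calc _ ≤ ‖Hpm H t p‖ + (‖Hpm H t p‖ + t * ‖gradient (fun q => Hmm H t q) p‖) := by
          grw [norm_add_le, norm_add_le, norm_smul, Real.norm_of_nonneg ht0.le]
      _ ≤ Cb * ‖p‖ + (Cb * ‖p‖ + max m m' * (Cb * ‖p‖)) := by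
          gcongr
          exacts [hpm t ht0 p, hpm t ht0 p, hmmp t ht0 p]
      _ = K := by ring
  have hlip : ∀ t ∈ Set.uIcc m' m, ‖(Hp H t p + t • Hpm H t p) - (Hp H m' p + m' • Hpm H m' p)‖
      ≤ K * |t - m'| := fun t ht => by
    simpa [Real.norm_eq_abs] using (convex_uIcc m' m).norm_image_sub_le_of_norm_hasDerivWithin_le
      (fun t ht => (hderiv2 t ht).hasDerivWithinAt) hbound Set.left_mem_uIcc ht
  exact (convex_uIcc m' m).norm_image_sub_sub_smul_le_of_lipschitz
    (fun t ht => (hderiv t ht).hasDerivWithinAt) (by positivity) hlip Set.left_mem_uIcc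
    Set.right_mem_uIcc

theorem norm_mHp_remainder_le {m m' : ℝ} (hm' : 0 < m') (p p' : E d) :
    ‖m' • Hp H m' p' - m • Hp H m p - m' • Hpp H m' p' (p' - p) -
        (m' - m) • Hp H m' p' - (m' * (m' - m)) • Hpm H m' p'‖ ≤
      m' * ‖Hp H m' p - Hp H m' p' - Hpp H m' p' (p - p')‖ +
        ‖m • Hp H m p - m' • Hp H m' p - (m - m') • (Hp H m' p + m' • Hpm H m' p)‖ +
        |m' - m| * ‖Hp H m' p - Hp H m' p'‖ +
        m' * |m' - m| * ‖Hpm H m' p - Hpm H m' p'‖ := by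
  have hsplit : m' • Hp H m' p' - m • Hp H m p - m' • Hpp H m' p' (p' - p) -
      (m' - m) • Hp H m' p' - (m' * (m' - m)) • Hpm H m' p' =
      -(m' • (Hp H m' p - Hp H m' p' - Hpp H m' p' (p - p'))) -
        (m • Hp H m p - m' • Hp H m' p - (m - m') • (Hp H m' p + m' • Hpm H m' p)) +
        (m' - m) • (Hp H m' p - Hp H m' p') + (m' * (m' - m)) • (Hpm H m' p - Hpm H m' p') := by
    rw [show p - p' = -(p' - p) by abel, map_neg]
    module
  rw [hsplit]
  grw [norm_add_le, norm_add_le, norm_sub_le, norm_neg]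
  simp only [norm_smul, Real.norm_eq_abs, abs_mul, abs_of_pos hm', le_refl]

end Hamiltonian

/-- second-order Taylor remainder estimate for the map
`Φ(m,p) = m·H_p(m,p)` around `(m',p')`. If `H` is C³ with `|H_pp| ≤ C̄`,
`|H_pm| ≤ C̄|p|`, `|H_ppp| ≤ C̄`, `|H_ppm| ≤ C̄` and `|H_mmp| ≤ C̄|p|`, then for
all `R, M > 0` there is `C > 0` (depending only on `C̄, R, M`) such that for all
`0 < m ≤ M`, `m' > 0`, `|p| ≤ R`, with `δp = p' - p` and `δm = m' - m`:
`|m'H_p(m',p') - mH_p(m,p) - m'H_pp(m',p')δp - δm·H_p(m',p') - m'H_pm(m',p')δm|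
  ≤ C(|δp|² + |δm|² + |δp|⁴ + |δm|⁴ + |δm|³ + |δm|⁶)`. -/
theorem mHp_second_order_taylor_estimate
    (d : ℕ) (H : ℝ → E d → ℝ)
    (hC3 : ContDiffOn ℝ 3 (fun q : ℝ × E d => H q.1 q.2) {q : ℝ × E d | 0 < q.1})
    (Cb : ℝ) (hCb : 0 < Cb)
    (hpp : ∀ m : ℝ, 0 < m → ∀ p : E d, ‖Hpp H m p‖ ≤ Cb)
    (hpm : ∀ m : ℝ, 0 < m → ∀ p : E d, ‖Hpm H m p‖ ≤ Cb * ‖p‖)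
    (hppp : ∀ m : ℝ, 0 < m → ∀ p : E d,
      ‖iteratedFDeriv ℝ 3 (fun q => H m q) p‖ ≤ Cb)
    (hppm : ∀ m : ℝ, 0 < m → ∀ p : E d,
      ‖iteratedFDeriv ℝ 2 (fun q => Hm H m q) p‖ ≤ Cb)
    (hmmp : ∀ m : ℝ, 0 < m → ∀ p : E d,
      ‖gradient (fun q => Hmm H m q) p‖ ≤ Cb * ‖p‖) :
    ∀ R M : ℝ, 0 < R → 0 < M → ∃ C : ℝ, 0 < C ∧
      ∀ (m m' : ℝ) (p p' : E d), 0 < m → m ≤ M → 0 < m' → ‖p‖ ≤ R →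
        ‖m' • Hp H m' p' - m • Hp H m p - m' • Hpp H m' p' (p' - p) -
            (m' - m) • Hp H m' p' - (m' * (m' - m)) • Hpm H m' p'‖ ≤
          C * (‖p' - p‖ ^ 2 + |m' - m| ^ 2 + ‖p' - p‖ ^ 4 + |m' - m| ^ 4 +
            |m' - m| ^ 3 + |m' - m| ^ 6) := by
  intro R M hR hM
  refine ⟨Cb * (2 * M + 3 + R * (3 + M)), by positivity, ?_⟩
  intro m m' p p' hm hmM hm' hpR
  have hm'_le : m' ≤ M + |m' - m| := by linarith [le_abs_self (m' - m)]
  have hmax : max m m' ≤ M + |m' - m| := max_le (by linarith [abs_nonneg (m' - m)]) hm'_le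
  have hp_taylor : ‖Hp H m' p - Hp H m' p' - Hpp H m' p' (p - p')‖ ≤ Cb * ‖p - p'‖ ^ 2 :=
    norm_gradient_sub_sub_fderiv_gradient_le (contDiff_H hC3 hm') (hppp m' hm') p' p
  have hm_taylor : ‖m • Hp H m p - m' • Hp H m' p - (m - m') • (Hp H m' p + m' • Hpm H m' p)‖ ≤
      Cb * R * (2 + (M + |m' - m|)) * |m' - m| ^ 2 := by
    grw [norm_smul_Hp_sub_sub_le hC3 hCb.le hpm hmmp hm hm' p, hpR, hmax, abs_sub_comm]
  have hHp_lip : ‖Hp H m' p - Hp H m' p'‖ ≤ Cb * ‖p - p'‖ :=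
    norm_gradient_sub_le_of_norm_fderiv_gradient_le ((contDiff_H hC3 hm').of_le (by norm_num))
      (hpp m' hm') p p'
  have hHpm_lip : ‖Hpm H m' p - Hpm H m' p'‖ ≤ Cb * ‖p - p'‖ :=
    norm_gradient_sub_le_of_norm_iteratedFDeriv_two_le (contDiff_Hm hC3 hm') (hppm m' hm') p p'
  rw [norm_sub_rev p p'] at hp_taylor hHp_lip hHpm_lip
  set D := ‖p' - p‖
  set e := |m' - m|
  calc _ ≤ _ := norm_mHp_remainder_le hm' p p'
    _ ≤ (M + e) * (Cb * D ^ 2) + Cb * R * (2 + (M + e)) * e ^ 2 + e * (Cb * D) +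
        (M + e) * e * (Cb * D) := by gcongr
    _ = Cb * ((M + e) * D ^ 2 + R * (2 + (M + e)) * e ^ 2 + e * D + (M + e) * e * D) := by ring
    _ ≤ Cb * ((2 * M + 3 + R * (3 + M)) * (D ^ 2 + e ^ 2 + D ^ 4 + e ^ 4 + e ^ 3 + e ^ 6)) := by
      grw [taylor_remainder_terms_le hM.le hR.le (norm_nonneg _) (abs_nonneg _)]
    _ = _ := (mul_assoc _ _ _).symm
end
end

section
/- Let K > 1 and let p, q, P, Q ≥ 0 be real numbers such that p + q ≤ 1/(12K) and P + Q ≤ K·[p² + p⁴ + q² + q³ + q⁴ + q⁶ + (p + q + p² + p⁴ + q² + q⁴)·(P + Q)]. Then P + Q ≤ (32K/3)·(p + q)², and consequently P + Q ≤ 2/(27K) < 1/(12K). -/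
/-! With `s = p + q ≤ 1/(12K) ≤ 1/12`, every higher power in the hypothesis is dominated by a
quadratic one, so the constant term is at most `4 s²` and the coefficient of `P + Q` is at most
`(7/6) s`, which `K` turns into `7/72 < 1`. Absorbing that term on the left gives
`P + Q ≤ (288/65) K s²`, and `s ≤ 1/(12K)` then gives `(32K/3) s² ≤ 2/(27K)`. -/

section

variable {p q : ℝ}

lemma quadratic_terms_le_four_mul_sq (hp : 0 ≤ p) (hq : 0 ≤ q) (hs : p + q ≤ 1) :
    p ^ 2 + p ^ 4 + q ^ 2 + q ^ 3 + q ^ 4 + q ^ 6 ≤ 4 * (p + q) ^ 2 := by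
  have hp1 : p ≤ 1 := by linarith
  have hq1 : q ≤ 1 := by linarith
  have hp4 := pow_le_pow_of_le_one hp hp1 (show 2 ≤ 4 by norm_num)
  have hq3 := pow_le_pow_of_le_one hq hq1 (show 2 ≤ 3 by norm_num)
  have hq4 := pow_le_pow_of_le_one hq hq1 (show 2 ≤ 4 by norm_num)
  have hq6 := pow_le_pow_of_le_one hq hq1 (show 2 ≤ 6 by norm_num)
  nlinarith [mul_nonneg hp hq]

lemma linear_terms_le_add_two_mul_sq (hp : 0 ≤ p) (hq : 0 ≤ q) (hs : p + q ≤ 1) :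
    p + q + p ^ 2 + p ^ 4 + q ^ 2 + q ^ 4 ≤ (p + q) + 2 * (p + q) ^ 2 := by
  have hp4 := pow_le_pow_of_le_one hp (by linarith) (show 2 ≤ 4 by norm_num)
  have hq4 := pow_le_pow_of_le_one hq (by linarith) (show 2 ≤ 4 by norm_num)
  nlinarith [mul_nonneg hp hq]

end

lemma sub_mul_le_of_le_add_mul {a b c x : ℝ} (hx : 0 ≤ x) (hbc : b ≤ c) (h : x ≤ a + b * x) :
    (1 - c) * x ≤ a := by
  nlinarith [mul_le_mul_of_nonneg_right hbc hx]

/-- the one-step estimate in the induction proving quadratic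
convergence of Newton's method. If `K > 1`, `p, q, P, Q ≥ 0`, `p + q ≤ 1/(12K)`
and `P + Q ≤ K·[p² + p⁴ + q² + q³ + q⁴ + q⁶ + (p + q + p² + p⁴ + q² + q⁴)(P+Q)]`,
then `P + Q ≤ (32K/3)(p+q)²`, and consequently `P + Q ≤ 2/(27K) < 1/(12K)`. -/
theorem newton_one_step_estimate (K p q P Q : ℝ) (hK : 1 < K)
    (hp : 0 ≤ p) (hq : 0 ≤ q) (hP : 0 ≤ P) (hQ : 0 ≤ Q)
    (h1 : p + q ≤ 1 / (12 * K))
    (h2 : P + Q ≤ K * (p ^ 2 + p ^ 4 + q ^ 2 + q ^ 3 + q ^ 4 + q ^ 6 +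
      (p + q + p ^ 2 + p ^ 4 + q ^ 2 + q ^ 4) * (P + Q))) :
    P + Q ≤ 32 * K / 3 * (p + q) ^ 2 ∧
      P + Q ≤ 2 / (27 * K) ∧ 2 / (27 * K) < 1 / (12 * K) := by
  have hK0 : 0 < K := by linarith
  have hKs : K * (p + q) ≤ 1 / 12 := by
    calc K * (p + q) ≤ K * (1 / (12 * K)) := by gcongr
      _ = 1 / 12 := by field_simp
  have hs : p + q ≤ 1 / 12 :=
    (le_mul_of_one_le_left (add_nonneg hp hq) hK.le).trans hKs
  have hsq := quadratic_terms_le_four_mul_sq hp hq (by linarith)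
  have hlin := linear_terms_le_add_two_mul_sq hp hq (by linarith)
  have hcoeff : K * (p + q + p ^ 2 + p ^ 4 + q ^ 2 + q ^ 4) ≤ 7 / 72 := by
    nlinarith [mul_le_mul_of_nonneg_left hlin hK0.le]
  have habsorb := sub_mul_le_of_le_add_mul (a := K * (4 * (p + q) ^ 2))
    (add_nonneg hP hQ) hcoeff (by nlinarith [mul_le_mul_of_nonneg_left hsq hK0.le])
  have hmain : P + Q ≤ 32 * K / 3 * (p + q) ^ 2 := by nlinarith [sq_nonneg (p + q)]
  refine ⟨hmain, hmain.trans ?_, ?_⟩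
  · calc 32 * K / 3 * (p + q) ^ 2 ≤ 32 * K / 3 * (1 / (12 * K)) ^ 2 := by
          gcongr
      _ = 2 / (27 * K) := by field_simp; ring
  · rw [div_lt_div_iff₀ (by positivity) (by positivity)]
    linarith
end

section
/- Let K > 1 and let (p_n)_{n≥0}, (q_n)_{n≥0} be sequences of nonnegative real numbers such that p₀ + q₀ ≤ 1/(12K) and, for every n ≥ 1, p_n + q_n ≤ K·[p_{n-1}² + p_{n-1}⁴ + q_{n-1}² + q_{n-1}³ + q_{n-1}⁴ + q_{n-1}⁶ + (p_{n-1} + q_{n-1} + p_{n-1}² + p_{n-1}⁴ + q_{n-1}² + q_{n-1}⁴)·(p_n + q_n)]. Then for every n ≥ 0, p_n + q_n ≤ (3/(32K))·(8/9)^{2^n}; in particular p_n + q_n → 0. -/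
/-!
Write `e_n = p_n + q_n`. If `e_{n-1} ≤ E ≤ 1/(12K)` then every term of the recurrence is
controlled by `E`: the source terms sum to at most `4E²` and the coefficient of `e_n` to at most
`3E`, so `K·3E ≤ 1/4` lets the implicit term be absorbed and `e_n ≤ (16/3)K E²`. Since
`E ↦ (32/3)K E²` maps `(3/(32K))·r` to `(3/(32K))·r²`, the bound `(3/(32K))·(8/9)^(2^n)`,
which equals `1/(12K)` at `n = 0`, propagates by induction.
-/

open Filter Topology

lemma pow_le_pow_of_le_of_le_one {x E : ℝ} {m k : ℕ} (hx : 0 ≤ x) (hxE : x ≤ E) (hE : E ≤ 1)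
    (hmk : m ≤ k) : x ^ k ≤ E ^ m :=
  (pow_le_pow_left₀ hx hxE k).trans (pow_le_pow_of_le_one (hx.trans hxE) hE hmk)

lemma pow_add_pow_le_of_add_le_of_le_one {a b E : ℝ} {m k : ℕ} (ha : 0 ≤ a) (hb : 0 ≤ b)
    (hab : a + b ≤ E) (hE : E ≤ 1) (hk : k ≠ 0) (hmk : m ≤ k) : a ^ k + b ^ k ≤ E ^ m :=
  (pow_add_pow_le ha hb hk).trans (pow_le_pow_of_le_of_le_one (add_nonneg ha hb) hab hE hmk)

lemma newton_step {K E a b e : ℝ} (hK : 0 < K) (ha : 0 ≤ a) (hb : 0 ≤ b) (hab : a + b ≤ E)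
    (hE : E ≤ 1) (hKE : K * E ≤ 1 / 12) (he : 0 ≤ e)
    (hrec : e ≤ K * (a ^ 2 + a ^ 4 + b ^ 2 + b ^ 3 + b ^ 4 + b ^ 6 +
      (a + b + a ^ 2 + a ^ 4 + b ^ 2 + b ^ 4) * e)) :
    e ≤ 32 * K / 3 * E ^ 2 := by
  have hbE : b ≤ E := by linarith
  have hsource : a ^ 2 + a ^ 4 + b ^ 2 + b ^ 3 + b ^ 4 + b ^ 6 ≤ 4 * E ^ 2 := by
    linarith [pow_add_pow_le_of_add_le_of_le_one ha hb hab hE (k := 2) (m := 2) two_ne_zero le_rfl,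
      pow_add_pow_le_of_add_le_of_le_one ha hb hab hE (k := 4) (m := 2) four_ne_zero (by norm_num),
      pow_le_pow_of_le_of_le_one hb hbE hE (k := 3) (m := 2) (by norm_num),
      pow_le_pow_of_le_of_le_one hb hbE hE (k := 6) (m := 2) (by norm_num)]
  have hcoeff : a + b + a ^ 2 + a ^ 4 + b ^ 2 + b ^ 4 ≤ 3 * E := by
    linarith [pow_add_pow_le_of_add_le_of_le_one ha hb hab hE (k := 2) (m := 1) two_ne_zero one_le_two,
      pow_add_pow_le_of_add_le_of_le_one ha hb hab hE (k := 4) (m := 1) four_ne_zero (by norm_num),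
      pow_one E]
  have habsorb : K * ((a + b + a ^ 2 + a ^ 4 + b ^ 2 + b ^ 4) * e) ≤ e / 4 := by
    calc K * ((a + b + a ^ 2 + a ^ 4 + b ^ 2 + b ^ 4) * e) ≤ K * (3 * E * e) := by gcongr
      _ = 3 * (K * E) * e := by ring
      _ ≤ 3 * (1 / 12) * e := by gcongr
      _ = e / 4 := by ring
  have hKsource : K * (a ^ 2 + a ^ 4 + b ^ 2 + b ^ 3 + b ^ 4 + b ^ 6) ≤ K * (4 * E ^ 2) := by
    gcongr
  have hKE2 : 0 ≤ K * E ^ 2 := by positivity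
  rw [mul_add] at hrec
  linarith

noncomputable def newtonBound (K : ℝ) (n : ℕ) : ℝ := 3 / (32 * K) * (8 / 9 : ℝ) ^ 2 ^ n

lemma newtonBound_nonneg {K : ℝ} (hK : 0 < K) (n : ℕ) : 0 ≤ newtonBound K n := by
  unfold newtonBound; positivity

lemma newtonBound_zero {K : ℝ} (hK : K ≠ 0) : newtonBound K 0 = 1 / (12 * K) := by
  unfold newtonBound; field_simp; norm_num

lemma newtonBound_le {K : ℝ} (hK : 0 < K) (n : ℕ) : newtonBound K n ≤ 1 / (12 * K) := by
  rw [← newtonBound_zero hK.ne']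
  unfold newtonBound
  gcongr _ * ?_
  exact pow_le_pow_of_le_one (by norm_num) (by norm_num) Nat.one_le_two_pow

lemma mul_newtonBound_le {K : ℝ} (hK : 0 < K) (n : ℕ) : K * newtonBound K n ≤ 1 / 12 := by
  calc K * newtonBound K n ≤ K * (1 / (12 * K)) := by gcongr; exact newtonBound_le hK n
    _ = 1 / 12 := by field_simp

lemma newtonBound_succ {K : ℝ} (hK : K ≠ 0) (n : ℕ) :
    newtonBound K (n + 1) = 32 * K / 3 * newtonBound K n ^ 2 := by
  unfold newtonBound
  rw [pow_succ, pow_mul]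
  field_simp

lemma tendsto_newtonBound (K : ℝ) : Tendsto (newtonBound K) atTop (𝓝 0) := by
  have h := ((tendsto_pow_atTop_nhds_zero_of_lt_one (by norm_num : (0 : ℝ) ≤ 8 / 9)
    (by norm_num)).comp (tendsto_pow_atTop_atTop_of_one_lt one_lt_two)).const_mul (3 / (32 * K))
  rw [mul_zero] at h
  exact h

/-- the recurrence satisfied by the Newton errors implies
quadratic decay. If `K > 1`, `p_n, q_n ≥ 0`, `p₀ + q₀ ≤ 1/(12K)` and for all
`n ≥ 1` the recurrence inequality of the paper holds, then
`p_n + q_n ≤ (3/(32K))·(8/9)^(2^n)` for every `n`, and `p_n + q_n → 0`. -/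
theorem newton_error_recurrence (K : ℝ) (hK : 1 < K) (p q : ℕ → ℝ)
    (hp : ∀ n, 0 ≤ p n) (hq : ∀ n, 0 ≤ q n)
    (h0 : p 0 + q 0 ≤ 1 / (12 * K))
    (hrec : ∀ n : ℕ, 1 ≤ n →
      p n + q n ≤ K * (p (n - 1) ^ 2 + p (n - 1) ^ 4 + q (n - 1) ^ 2 +
        q (n - 1) ^ 3 + q (n - 1) ^ 4 + q (n - 1) ^ 6 +
        (p (n - 1) + q (n - 1) + p (n - 1) ^ 2 + p (n - 1) ^ 4 +
          q (n - 1) ^ 2 + q (n - 1) ^ 4) * (p n + q n))) :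
    (∀ n : ℕ, p n + q n ≤ 3 / (32 * K) * (8 / 9 : ℝ) ^ 2 ^ n) ∧
      Filter.Tendsto (fun n => p n + q n) Filter.atTop (nhds 0) := by
  have hK0 : 0 < K := by linarith
  have hbound : ∀ n, p n + q n ≤ newtonBound K n := by
    intro n
    induction n with
    | zero => rwa [newtonBound_zero hK0.ne']
    | succ n ih =>
      have hKE := mul_newtonBound_le hK0 n
      have hE1 : newtonBound K n ≤ 1 := by nlinarith [newtonBound_nonneg hK0 n]
      rw [newtonBound_succ hK0.ne']
      exact newton_step hK0 (hp n) (hq n) ih hE1 hKE (add_nonneg (hp _) (hq _))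
        (by simpa only [Nat.add_sub_cancel] using hrec (n + 1) (by omega))
  exact ⟨hbound, squeeze_zero (fun n => add_nonneg (hp n) (hq n)) hbound (tendsto_newtonBound K)⟩
end
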